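/- The total number of Fink–Mao region words of length h for 3 ≤ h ≤ 9 is 85. Concretely, the counts for h = 3, 4, 5, 6, 7, 8, 9 are 1, 1, 3, 5, 11, 21, 43 respectively, and these sum to 85. -/

import Mathlib

/-- A region of the tie diagram: left, right, or center. -/
inductive Region : Type
  | L | R | C
deriving DecidableEq

open Region

/-- A Fink–Mao region word: a list of letters from {L, R, C} with consecutive
letters distinct, first letter `L`, ending with the suffix `L,R,C` or `R,L,C`. -/
def FMWord (w : List Region) : Prop :=
  w.Chain' (· ≠ ·) ∧ w.head? = some L ∧
    ([L, R, C] <:+ w ∨ [R, L, C] <:+ w)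

/-- `K h` is the number of Fink–Mao region words of length `h`. -/
noncomputable def K (h : ℕ) : ℕ := Nat.card {w : List Region // FMWord w ∧ w.length = h}

/-!
Drop the requirement that the first letter be `L` and count the words by their first letter `x`.
For length `n + 1 ≥ 4` the final three letters lie in the tail, so such a word is `x` followed by
a word of length `n` whose first letter is some `y ≠ x`. This gives the recurrence
`N(n + 1, x) = ∑_{y ≠ x} N(n, y)`, starting from length 3, whose only words are `LRC` and `RLC`.
-/

instance : Fintype Region := ⟨{L, R, C}, fun x => by cases x <;> decide⟩

def wordsFrom (x : Region) (n : ℕ) : Set (List Region) :=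
  {w | w.IsChain (· ≠ ·) ∧ w.head? = some x ∧ ([L, R, C] <:+ w ∨ [R, L, C] <:+ w) ∧ w.length = n}

lemma wordsFrom_eq_empty {n : ℕ} (hn : n < 3) (x : Region) : wordsFrom x n = ∅ :=
  Set.eq_empty_of_forall_notMem fun w ⟨_, _, hs, hl⟩ => by
    have : 3 ≤ w.length := by rcases hs with hs | hs <;> exact hs.length_le
    omega

lemma encard_wordsFrom_three (x : Region) :
    (wordsFrom x 3).encard = if x = C then 0 else 1 := by
  have h : wordsFrom x 3 =
      (({[L, R, C], [R, L, C]} : Finset (List Region)).filter (·.head? = some x) : Set _) := by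
    ext w
    simp only [wordsFrom, Set.mem_ofPred_eq, Finset.coe_filter, Finset.mem_insert,
      Finset.mem_singleton]
    constructor
    · rintro ⟨-, hx, hs | hs, hl⟩
      · exact ⟨.inl (hs.eq_of_length (by simp [hl])).symm, hx⟩
      · exact ⟨.inr (hs.eq_of_length (by simp [hl])).symm, hx⟩
    · rintro ⟨rfl | rfl, hx⟩ <;> simp only [List.head?_cons, Option.some.injEq] at hx <;>
        subst hx <;> decide
  rw [h, Set.encard_coe_eq_coe_finsetCard]
  cases x <;> rfl

lemma cons_mem_wordsFrom_succ {n : ℕ} (hn : 3 ≤ n) (a x : Region) (t : List Region) :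
    a :: t ∈ wordsFrom x (n + 1) ↔ a = x ∧ ∃ y ≠ x, t ∈ wordsFrom y n := by
  rcases t with _ | ⟨b, s⟩
  · simp only [wordsFrom, Set.mem_ofPred_eq, List.length_cons, List.length_nil]
    omega
  have short_ne (u : List Region) (hu : u.length = 3) (hl : s.length + 1 = n) : u ≠ a :: b :: s :=
    fun h => by simp only [h, List.length_cons] at hu hl; omega
  simp only [wordsFrom, Set.mem_ofPred_eq, List.isChain_cons_cons, List.suffix_cons_iff,
    List.head?_cons, Option.some.injEq, List.length_cons, Nat.add_right_cancel_iff]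
  constructor
  · rintro ⟨⟨hab, hc⟩, rfl, hs, hl⟩
    refine ⟨rfl, b, hab.symm, hc, rfl, ?_, hl⟩
    exact hs.imp (·.resolve_left (short_ne _ rfl hl)) (·.resolve_left (short_ne _ rfl hl))
  · rintro ⟨rfl, y, hy, hc, rfl, hs, hl⟩
    exact ⟨⟨hy.symm, hc⟩, rfl, hs.imp .inr .inr, hl⟩

lemma wordsFrom_succ {n : ℕ} (hn : 3 ≤ n) (x : Region) :
    wordsFrom x (n + 1) = ⋃ y ∈ ((Finset.univ.erase x : Finset Region) : Set Region),
      List.cons x '' wordsFrom y n := by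
  ext w
  rcases w with _ | ⟨a, t⟩
  · simp [wordsFrom]
  · rw [cons_mem_wordsFrom_succ hn]
    simp [and_comm, eq_comm]

lemma encard_wordsFrom_succ {n : ℕ} (hn : 3 ≤ n) (x : Region) :
    (wordsFrom x (n + 1)).encard = ∑ y ∈ Finset.univ.erase x, (wordsFrom y n).encard := by
  rw [wordsFrom_succ hn, (Finset.finite_toSet _).encard_biUnion, finsum_mem_coe_finset]
  · simp only [List.cons_injective.encard_image]
  · intro y _ z _ hyz
    refine (Set.disjoint_image_iff List.cons_injective).2 (Set.disjoint_left.2 fun w hy hz => ?_)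
    exact hyz (Option.some.inj (hy.2.1.symm.trans hz.2.1))

def wordCount : ℕ → Region → ℕ
  | 0, _ | 1, _ | 2, _ => 0
  | 3, x => if x = C then 0 else 1
  | n + 4, x => ∑ y ∈ Finset.univ.erase x, wordCount (n + 3) y

lemma encard_wordsFrom : ∀ (n : ℕ) (x : Region), (wordsFrom x n).encard = wordCount n x
  | 0, x | 1, x | 2, x => by rw [wordsFrom_eq_empty (by omega), Set.encard_empty, wordCount]; rfl
  | 3, x => by rw [encard_wordsFrom_three, wordCount]; split_ifs <;> rfl
  | n + 4, x => by
    rw [encard_wordsFrom_succ (by omega), wordCount, Nat.cast_sum]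
    exact Finset.sum_congr rfl fun y _ => encard_wordsFrom (n + 3) y

lemma K_eq_ncard_wordsFrom (h : ℕ) : K h = (wordsFrom L h).ncard := by
  have : {w | FMWord w ∧ w.length = h} = wordsFrom L h := by
    ext w
    simp only [FMWord, wordsFrom, Set.mem_ofPred_eq, and_assoc]
    rfl
  rw [← this]
  rfl

lemma K_eq_wordCount (h : ℕ) : K h = wordCount h L := by
  rw [K_eq_ncard_wordsFrom, Set.ncard_def, encard_wordsFrom, ENat.toNat_natCast]

/-- The counts of Fink–Mao region words of lengths 3 through 9 are
1, 1, 3, 5, 11, 21, 43, and the total over these lengths is 85. -/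
theorem eightyfive_ties :
    K 3 = 1 ∧ K 4 = 1 ∧ K 5 = 3 ∧ K 6 = 5 ∧ K 7 = 11 ∧ K 8 = 21 ∧ K 9 = 43 ∧
    (∑ h ∈ Finset.Icc 3 9, K h) = 85 := by
  simp only [K_eq_wordCount]
  decide
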